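/- In a solid, a zeroless element x is positive if and only if its inverse x⁻¹ is positive: e(x) < x iff e(x⁻¹) < x⁻¹. -/

import Mathlib

structure Assembly (A : Type*) where
  add : A → A → A
  e : A → A
  neg : A → A
  add_assoc : ∀ x y z, add x (add y z) = add (add x y) z
  add_comm : ∀ x y, add x y = add y x
  add_e : ∀ x, add x (e x) = x
  e_max : ∀ x f, add x f = x → add (e x) f = e x
  add_neg : ∀ x, add x (neg x) = e x
  e_neg : ∀ x, e (neg x) = e x
  e_add : ∀ x y, e (add x y) = e x ∨ e (add x y) = e y

structure OrderedAssembly (A : Type*) extends Assembly A where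
  le : A → A → Prop
  le_refl : ∀ x, le x x
  le_antisymm : ∀ x y, le x y → le y x → x = y
  le_trans : ∀ x y z, le x y → le y z → le x z
  le_total : ∀ x y, le x y ∨ le y x
  add_le_add : ∀ x y z, le x y → le (add x z) (add y z)
  le_e : ∀ x y, add y (e x) = e x → le y (e x) ∧ le (neg y) (e x)

structure Solid (A : Type*) extends OrderedAssembly A where
  mul : A → A → A
  u : A → A
  inv : A → A
  mul_assoc : ∀ x y z, mul x (mul y z) = mul (mul x y) z
  mul_comm : ∀ x y, mul x y = mul y x
  mul_u : ∀ x, x ≠ e x → mul x (u x) = x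
  u_max : ∀ x, x ≠ e x → ∀ v, mul x v = x → mul (u x) v = u x
  mul_inv : ∀ x, x ≠ e x → mul x (inv x) = u x
  u_inv : ∀ x, x ≠ e x → u (inv x) = u x
  u_mul : ∀ x y, x ≠ e x → y ≠ e y →
    u (mul x y) = u x ∨ u (mul x y) = u y
  compat_mul : ∀ x y z, le (e x) x → e x ≠ x → le y z → le (mul x y) (mul x z)
  amplification : ∀ x y z, le (e y) y → le y z → le (mul (e x) y) (mul (e x) z)
  escala : ∀ x y, ∃ z, mul (e x) y = e z
  e_mul : ∀ x y, e (mul x y) = add (mul (e x) y) (mul (e y) x)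
  e_u : ∀ x, x ≠ e x → e (u x) = mul (e x) (inv x)
  dist : ∀ x y z, add (mul x y) (mul x z) =
    add (add (mul x (add y z)) (mul (e x) y)) (mul (e x) z)
  neg_mul : ∀ x y, neg (mul x y) = mul (neg x) y
  zero : A
  add_zero : ∀ x, add x zero = x
  one : A
  one_mul : ∀ x, mul one x = x
  M : A
  e_add_M : ∀ x, add (e x) M = M
  exists_neutrix : ∃ x, e x ≠ zero ∧ e x ≠ M
  decomp : ∀ x, ∃ a, x = add a (e x) ∧ e a = zero
  dense : ∀ x y, x = e x → y = e y → le x y → x ≠ y →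
    ∃ z, z ≠ e z ∧ le x z ∧ x ≠ z ∧ le z y ∧ z ≠ y

/-!
Write `x⁻¹ = x · (x⁻¹)²`. A square of a zeroless element is positive (for negative `x`, pass to
`-x`, which has the same square), and a product `x s` of positive zeroless elements is positive,
because its neutrix `e(x) s + e(s) x` is a sum of two neutrices, hence one of the two summands,
and each summand lies below `x s` by compatibility with multiplication. The converse follows by
applying this to `x⁻¹`, since `(x⁻¹)⁻¹ = x`.
-/

namespace Assembly

variable {A : Type*} (T : Assembly A)

theorem e_e (x : A) : T.e (T.e x) = T.e x := by
  simpa only [T.add_neg, T.e_neg, or_self] using T.e_add x (T.neg x)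

theorem add_self_of_eq_e {a : A} (ha : a = T.e a) : T.add a a = a := by
  have h := T.e_max a (T.e a) (T.add_e a)
  rwa [← ha] at h

theorem neg_neg (x : A) : T.neg (T.neg x) = x :=
  calc T.neg (T.neg x) = T.add (T.neg (T.neg x)) (T.add x (T.neg x)) := by
        rw [T.add_neg, ← T.e_neg x, ← T.e_neg (T.neg x), T.add_e]
    _ = T.add x (T.add (T.neg x) (T.neg (T.neg x))) := by
        rw [T.add_assoc x, T.add_comm (T.add x (T.neg x))]
    _ = x := by rw [T.add_neg, T.e_neg, T.add_e]

theorem neg_ne_e {x : A} (hx : x ≠ T.e x) : T.neg x ≠ T.e (T.neg x) := by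
  rw [T.e_neg]
  intro h
  exact hx (by simpa only [h, T.add_e] using T.add_neg x)

theorem add_eq_left_or_right_of_eq_e {a b : A} (ha : a = T.e a) (hb : b = T.e b) :
    T.add a b = a ∨ T.add a b = b := by
  have hab : T.add (T.add a b) a = T.add a b := by
    rw [T.add_comm, T.add_assoc, T.add_self_of_eq_e ha]
  have hba : T.add (T.add a b) b = T.add a b := by
    rw [← T.add_assoc, T.add_self_of_eq_e hb]
  rcases T.e_add a b with h | h
  · left
    simpa only [h, ← ha] using T.e_max _ b hba
  · right
    simpa only [h, ← hb, T.add_comm b a] using T.e_max _ a hab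

end Assembly

theorem OrderedAssembly.e_neg_le_neg_of_le_e {A : Type*} (T : OrderedAssembly A) {x : A}
    (h : T.le x (T.e x)) : T.le (T.e (T.neg x)) (T.neg x) := by
  have h' := T.add_le_add x (T.e x) (T.neg x) h
  rwa [T.add_neg, T.add_comm (T.e x), ← T.e_neg x, T.add_e] at h'

namespace Solid

variable {A : Type*} (S : Solid A)

theorem e_mul_e_left (x y : A) : S.e (S.mul (S.e x) y) = S.mul (S.e x) y := by
  obtain ⟨z, hz⟩ := S.escala x y
  rw [hz, S.e_e]

theorem mul_eq_e_of_left_eq_e {w : A} (hw : w = S.e w) (y : A) :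
    S.mul w y = S.e (S.mul w y) := by
  rw [hw, S.e_mul_e_left]

theorem u_ne_e {x : A} (hx : x ≠ S.e x) : S.u x ≠ S.e (S.u x) := by
  intro h
  have h' := S.mul_eq_e_of_left_eq_e h x
  rw [S.mul_comm, S.mul_u x hx] at h'
  exact hx h'

theorem inv_ne_e {x : A} (hx : x ≠ S.e x) : S.inv x ≠ S.e (S.inv x) := by
  intro h
  have h' := S.mul_eq_e_of_left_eq_e h x
  rw [S.mul_comm, S.mul_inv x hx] at h'
  exact S.u_ne_e hx h'

theorem mul_self_ne_e {x : A} (hx : x ≠ S.e x) : S.mul x x ≠ S.e (S.mul x x) := by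
  intro h
  have h' := S.mul_eq_e_of_left_eq_e h (S.inv x)
  rw [← S.mul_assoc, S.mul_inv x hx, S.mul_u x hx] at h'
  exact hx h'

theorem inv_inv {x : A} (hx : x ≠ S.e x) : S.inv (S.inv x) = x := by
  have hi := S.inv_ne_e hx
  have hii := S.inv_ne_e hi
  calc S.inv (S.inv x) = S.mul (S.inv (S.inv x)) (S.mul x (S.inv x)) := by
        rw [S.mul_inv x hx, ← S.u_inv x hx, ← S.u_inv _ hi, S.mul_u _ hii]
    _ = S.mul x (S.mul (S.inv x) (S.inv (S.inv x))) := by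
        rw [S.mul_comm, S.mul_assoc]
    _ = x := by rw [S.mul_inv _ hi, S.u_inv x hx, S.mul_u x hx]

theorem inv_eq_mul_mul_self_inv {x : A} (hx : x ≠ S.e x) :
    S.inv x = S.mul x (S.mul (S.inv x) (S.inv x)) := by
  rw [S.mul_assoc, S.mul_inv x hx, S.mul_comm, ← S.u_inv x hx, S.mul_u _ (S.inv_ne_e hx)]

theorem neg_mul_neg_self (x : A) : S.mul (S.neg x) (S.neg x) = S.mul x x := by
  rw [← S.neg_mul, S.mul_comm x (S.neg x), ← S.neg_mul, S.neg_neg]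

theorem e_le_mul {x s : A} (hx : x ≠ S.e x) (hxp : S.le (S.e x) x)
    (hs : s ≠ S.e s) (hsp : S.le (S.e s) s) : S.le (S.e (S.mul x s)) (S.mul x s) := by
  rcases S.add_eq_left_or_right_of_eq_e (S.e_mul_e_left x s).symm (S.e_mul_e_left s x).symm
    with h | h <;> rw [S.e_mul, h]
  · simpa only [S.mul_comm s] using S.compat_mul s (S.e x) x hsp hs.symm hxp
  · simpa only [S.mul_comm x (S.e s)] using S.compat_mul x (S.e s) s hxp hx.symm hsp

theorem e_le_mul_self {x : A} (hx : x ≠ S.e x) : S.le (S.e (S.mul x x)) (S.mul x x) := by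
  rcases S.le_total (S.e x) x with hxp | hxn
  · exact S.e_le_mul hx hxp hx hxp
  · have hn := S.neg_ne_e hx
    have hnp := S.e_neg_le_neg_of_le_e hxn
    rw [← S.neg_mul_neg_self]
    exact S.e_le_mul hn hnp hn hnp

theorem e_inv_le_inv_of_e_le {x : A} (hx : x ≠ S.e x) (hxp : S.le (S.e x) x) :
    S.le (S.e (S.inv x)) (S.inv x) := by
  have hi := S.inv_ne_e hx
  rw [S.inv_eq_mul_mul_self_inv hx]
  exact S.e_le_mul hx hxp (S.mul_self_ne_e hi) (S.e_le_mul_self hi)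

end Solid

theorem stmt13 {A : Type*} (S : Solid A) (x : A) (hx : x ≠ S.e x) :
    (S.le (S.e x) x ∧ S.e x ≠ x) ↔
    (S.le (S.e (S.inv x)) (S.inv x) ∧ S.e (S.inv x) ≠ S.inv x) := by
  constructor
  · rintro ⟨hxp, -⟩
    exact ⟨S.e_inv_le_inv_of_e_le hx hxp, (S.inv_ne_e hx).symm⟩
  · rintro ⟨hip, hi⟩
    refine ⟨?_, hx.symm⟩
    simpa only [S.inv_inv hx] using S.e_inv_le_inv_of_e_le hi.symm hip
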